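/- arXiv:0901.4811 — 3 statements merged into one kernel-verified Lean document; each statement's English description precedes it below -/
import Mathlib

section
/- Let f₁,…,f_M : ℝ^d → ℝ^d be affine maps, and define φ(x) = {x + Δt f_i(x) : 1 ≤ i ≤ M} and ψ(x) = x + Δt·co({f_i(x)}). Then for every z ∈ ℝ^d and m ≥ 1, co(ψ(co(φ^(m)(z)))) = co(φ^(m+1)(z)), where φ^(m) denotes the m-fold iterated image and ψ(A) = ⋃_{x∈A} ψ(x). -/
open scoped Pointwise

/-- Image of a set under a set-valued map. -/
def setImage {E : Type*} (φ : E → Set E) (A : Set E) : Set E := ⋃ x ∈ A, φ x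

/-- `m`-fold iterated image of a point under a set-valued map. -/
def iterMap {E : Type*} (φ : E → Set E) : ℕ → E → Set E
  | 0, z => {z}
  | n + 1, z => setImage φ (iterMap φ n z)

theorem convexified_evolution_affine (d M : ℕ) (Δt : ℝ) (hΔt : 0 < Δt)
    (f : Fin M → (EuclideanSpace ℝ (Fin d) →ᵃ[ℝ] EuclideanSpace ℝ (Fin d)))
    (z : EuclideanSpace ℝ (Fin d)) (m : ℕ) (hm : 1 ≤ m) :
    convexHull ℝ (setImage
        (fun x => {x} + Δt • convexHull ℝ (Set.range fun i => f i x))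
        (convexHull ℝ (iterMap (fun x => ⋃ i, {x + Δt • f i x}) m z))) =
      convexHull ℝ (iterMap (fun x => ⋃ i, {x + Δt • f i x}) (m + 1) z) := by
  classical
  let E := EuclideanSpace ℝ (Fin d)
  set g : Fin M → (E →ᵃ[ℝ] E) := fun i => AffineMap.id ℝ E + Δt • f i with hg
  have hgx : ∀ (i : Fin M) (x : E), g i x = x + Δt • f i x := by
    intro i x; simp [hg]
  set φ : E → Set E := fun x => ⋃ i, {x + Δt • f i x} with hφ
  have hφr : ∀ x, φ x = Set.range fun i => g i x := by
    intro x
    simp only [hφ, Set.iUnion_singleton_eq_range]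
    congr 1
  set ψ : E → Set E := fun x =>
      {x} + Δt • convexHull ℝ (Set.range fun i => f i x) with hψ
  have hψc : ∀ x, ψ x = convexHull ℝ (φ x) := by
    intro x
    rw [hφr]
    simp only [hψ]
    rw [← convexHull_smul, ← convexHull_singleton (𝕜 := ℝ) x, ← convexHull_add]
    congr 1
    ext y
    constructor
    · rintro ⟨a, ha, b, hb, rfl⟩
      rcases hb with ⟨c, ⟨i, rfl⟩, rfl⟩
      refine ⟨i, ?_⟩
      simp only [hgx, Set.mem_singleton_iff.1 ha]
    · rintro ⟨i, rfl⟩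
      exact ⟨x, rfl, Δt • f i x, ⟨f i x, ⟨i, rfl⟩, rfl⟩, (hgx i x)⟩
  set A : Set E := iterMap φ m z with hA
  show convexHull ℝ (setImage ψ (convexHull ℝ A)) =
      convexHull ℝ (iterMap φ (m + 1) z)
  have hiter : iterMap φ (m + 1) z = setImage φ A := rfl
  rw [hiter]
  apply subset_antisymm
  · apply convexHull_min _ (convex_convexHull ℝ _)
    intro y hy
    rcases Set.mem_iUnion₂.1 hy with ⟨x, hx, hyx⟩
    rw [hψc] at hyx
    have hsub : φ x ⊆ convexHull ℝ (setImage φ A) := by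
      rw [hφr]
      rintro _ ⟨i, rfl⟩
      have : g i x ∈ g i '' (convexHull ℝ A) := Set.mem_image_of_mem _ hx
      rw [AffineMap.image_convexHull] at this
      refine convexHull_mono ?_ this
      rintro _ ⟨a, ha, rfl⟩
      exact Set.mem_iUnion₂.2 ⟨a, ha, by rw [hφr]; exact ⟨i, rfl⟩⟩
    exact convexHull_min hsub (convex_convexHull ℝ _) hyx
  · apply convexHull_mono
    intro y hy
    rcases Set.mem_iUnion₂.1 hy with ⟨x, hx, hyx⟩
    refine Set.mem_iUnion₂.2 ⟨x, subset_convexHull ℝ A hx, ?_⟩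
    rw [hψc]
    exact subset_convexHull ℝ _ hyx
end

section
/- Suppose f₁,…,f_M : ℝ^d → ℝ^d satisfy |f_i(x)| ≤ K, |f_i'(x)| ≤ L, and |f_i(x) − f_i(z) − f_i'(z)(x−z)| ≤ S|x−z|² for all x, z. Let φ(x) = {x + Δt f_i(x) : i} and ψ(x) = x + Δt·co({f_i(x)}_i). Then for all z: ψ(co(φ^(M−1)(z))) ⊆ co(φ^M(z)) + S K² (M(M−1)(2M−1)/3) Δt³ · B. -/
/-!
Write `y ∈ co(φ^(M-1)(z))` as a convex combination `∑ wⱼ xⱼ` of points `xⱼ ∈ φ^(M-1)(z)`, all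
within `(M-1) K Δt` of `z`. For each `i`, the point `q = ∑ wⱼ (xⱼ + Δt fᵢ(xⱼ))` lies in
`co(φ^M(z))`, and since `∑ wⱼ fᵢ'(y)(xⱼ - y) = 0`, the second-order bound gives
`‖y + Δt fᵢ(y) - q‖ ≤ Δt S ∑ wⱼ ‖xⱼ - y‖² ≤ Δt S ((M-1) K Δt)²`, the weighted variance being at
most the weighted second moment about `z`; and `(M-1)² ≤ M(M-1)(2M-1)/3`. Hence every vertex
`y + Δt fᵢ(y)` of `ψ(y)` lies in the convex set `co(φ^M(z)) + r B`, and so does `ψ(y)`.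
-/

open scoped Pointwise

open Metric Set

theorem iterMap_subset_closedBall {X : Type*} [PseudoMetricSpace X] {φ : X → Set X} {δ : ℝ}
    (hφ : ∀ x, φ x ⊆ closedBall x δ) (z : X) (n : ℕ) : iterMap φ n z ⊆ closedBall z (n * δ) := by
  induction n with
  | zero => simp [iterMap]
  | succ n ih =>
    refine iUnion₂_subset fun x hx => (hφ x).trans (closedBall_subset_closedBall' ?_)
    push_cast
    linarith [mem_closedBall.1 (ih hx)]

section NormedSpace

variable {E F : Type*} [NormedAddCommGroup E] [NormedSpace ℝ E]
  [NormedAddCommGroup F] [NormedSpace ℝ F]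

theorem norm_add_smul_sub_sub_le {f : E → E} {D : E → E →L[ℝ] E} {S : ℝ}
    (hf : ∀ x z, ‖f x - f z - D z (x - z)‖ ≤ S * ‖x - z‖ ^ 2) (c : ℝ) (x z : E) :
    ‖x + c • f x - (z + c • f z) - (ContinuousLinearMap.id ℝ E + c • D z) (x - z)‖ ≤
      |c| * S * ‖x - z‖ ^ 2 := by
  have hrem : x + c • f x - (z + c • f z) - (ContinuousLinearMap.id ℝ E + c • D z) (x - z) =
      c • (f x - f z - D z (x - z)) := by
    simp only [add_apply, ContinuousLinearMap.id_apply, smul_apply, smul_sub]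
    abel
  rw [hrem, norm_smul, Real.norm_eq_abs, mul_assoc]
  exact mul_le_mul_of_nonneg_left (hf x z) (abs_nonneg c)

theorem norm_sub_sum_smul_le {ι : Type*} [Fintype ι] {w : ι → ℝ} (hw₀ : ∀ i, 0 ≤ w i)
    (hw₁ : ∑ i, w i = 1) {x : ι → E} {g : E → F} {D : E → E →L[ℝ] F} {S : ℝ}
    (hg : ∀ x z, ‖g x - g z - D z (x - z)‖ ≤ S * ‖x - z‖ ^ 2) :
    ‖g (∑ i, w i • x i) - ∑ i, w i • g (x i)‖ ≤
      S * ∑ i, w i * ‖x i - ∑ j, w j • x j‖ ^ 2 := by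
  set y := ∑ j, w j • x j
  have hlin : ∑ i, w i • D y (x i - y) = 0 := by
    simp only [← map_smul, ← map_sum, smul_sub, Finset.sum_sub_distrib, ← Finset.sum_smul, hw₁,
      one_smul, y, sub_self, map_zero]
  have hgap : g y - ∑ i, w i • g (x i) = ∑ i, w i • -(g (x i) - g y - D y (x i - y)) := by
    rw [← add_zero (g y - _), ← hlin]
    simp only [smul_neg, smul_sub, Finset.sum_neg_distrib, Finset.sum_sub_distrib,
      ← Finset.sum_smul, hw₁, one_smul]
    abel
  rw [hgap, Finset.mul_sum]
  refine norm_sum_le_of_le _ fun i _ => ?_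
  rw [norm_smul, norm_neg, Real.norm_of_nonneg (hw₀ i), mul_left_comm]
  exact mul_le_mul_of_nonneg_left (hg _ _) (hw₀ i)

end NormedSpace

section InnerProductSpace

variable {E F : Type*} [NormedAddCommGroup E] [InnerProductSpace ℝ E]
  [NormedAddCommGroup F] [NormedSpace ℝ F]

theorem sum_mul_norm_sub_centerMass_sq_le {ι : Type*} [Fintype ι] {w : ι → ℝ}
    (hw₁ : ∑ i, w i = 1) (x : ι → E) (z : E) :
    ∑ i, w i * ‖x i - ∑ j, w j • x j‖ ^ 2 ≤ ∑ i, w i * ‖x i - z‖ ^ 2 := by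
  set y := ∑ j, w j • x j
  have hdev : ∑ i, w i • (x i - y) = 0 := by
    simp only [smul_sub, Finset.sum_sub_distrib, ← Finset.sum_smul, hw₁, one_smul, y, sub_self]
  have hcross : ∑ i, w i * inner ℝ (x i - y) (y - z) = 0 := by
    simp only [← real_inner_smul_left, ← sum_inner, hdev, inner_zero_left]
  have hsplit : ∑ i, w i * ‖x i - z‖ ^ 2 =
      ∑ i, w i * ‖x i - y‖ ^ 2 + 2 * ∑ i, w i * inner ℝ (x i - y) (y - z) + ‖y - z‖ ^ 2 := by
    have hterm (i : ι) : w i * ‖x i - z‖ ^ 2 = w i * ‖x i - y‖ ^ 2 +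
        2 * (w i * inner ℝ (x i - y) (y - z)) + w i * ‖y - z‖ ^ 2 := by
      rw [← sub_add_sub_cancel (x i) y z, norm_add_sq_real]
      ring
    simp only [hterm, Finset.sum_add_distrib, ← Finset.mul_sum, ← Finset.sum_mul, hw₁, one_mul]
  rw [hsplit, hcross]
  nlinarith [sq_nonneg ‖y - z‖]

theorem mem_convexHull_image_add_closedBall {g : E → F} {D : E → E →L[ℝ] F} {S : ℝ}
    (hg : ∀ x z, ‖g x - g z - D z (x - z)‖ ≤ S * ‖x - z‖ ^ 2) {A : Set E} {z : E} {R : ℝ}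
    (hA : A ⊆ closedBall z R) {y : E} (hy : y ∈ convexHull ℝ A) :
    g y ∈ convexHull ℝ (g '' A) + closedBall 0 (|S| * R ^ 2) := by
  obtain ⟨ι, _, w, x, hw₀, hw₁, hxA, rfl⟩ := mem_convexHull_iff_exists_fintype.1 hy
  have hq : ∑ i, w i • g (x i) ∈ convexHull ℝ (g '' A) :=
    mem_convexHull_of_exists_fintype w (g ∘ x) hw₀ hw₁ (fun i => mem_image_of_mem g (hxA i)) rfl
  have hvar : ∑ i, w i * ‖x i - ∑ j, w j • x j‖ ^ 2 ≤ R ^ 2 :=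
    calc ∑ i, w i * ‖x i - ∑ j, w j • x j‖ ^ 2 ≤ ∑ i, w i * ‖x i - z‖ ^ 2 :=
          sum_mul_norm_sub_centerMass_sq_le hw₁ x z
      _ ≤ ∑ i, w i * R ^ 2 := by
          gcongr with i
          · exact hw₀ i
          · exact mem_closedBall_iff_norm.1 (hA (hxA i))
      _ = R ^ 2 := by rw [← Finset.sum_mul, hw₁, one_mul]
  refine ⟨_, hq, _, mem_closedBall_zero_iff.2 ?_, add_sub_cancel _ _⟩
  calc _ ≤ S * ∑ i, w i * ‖x i - ∑ j, w j • x j‖ ^ 2 := norm_sub_sum_smul_le hw₀ hw₁ hg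
    _ ≤ |S| * R ^ 2 := mul_le_mul (le_abs_self S) hvar
      (Finset.sum_nonneg fun i _ => mul_nonneg (hw₀ i) (sq_nonneg _)) (abs_nonneg S)

theorem add_smul_mem_convexHull_iterMap_succ_add_closedBall {ι : Type*} {f : ι → E → E}
    {D : ι → E → E →L[ℝ] E} {K S : ℝ} (Δt : ℝ)
    (hK : ∀ i x, ‖f i x‖ ≤ K) (hS : ∀ i x z, ‖f i x - f i z - D i z (x - z)‖ ≤ S * ‖x - z‖ ^ 2)
    {n : ℕ} {z y : E} (hy : y ∈ convexHull ℝ (iterMap (fun x => ⋃ i, {x + Δt • f i x}) n z))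
    (i : ι) :
    y + Δt • f i y ∈ convexHull ℝ (iterMap (fun x => ⋃ i, {x + Δt • f i x}) (n + 1) z) +
      closedBall 0 (|Δt| * |S| * (n * (|Δt| * K)) ^ 2) := by
  have hstep (x : E) : ⋃ i, {x + Δt • f i x} ⊆ closedBall x (|Δt| * K) := iUnion_subset fun i => by
    rw [singleton_subset_iff, mem_closedBall_iff_norm, add_sub_cancel_left, norm_smul,
      Real.norm_eq_abs]
    exact mul_le_mul_of_nonneg_left (hK i x) (abs_nonneg Δt)
  have hgap := mem_convexHull_image_add_closedBall (norm_add_smul_sub_sub_le (hS i) Δt)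
    (iterMap_subset_closedBall hstep z n) hy
  rw [abs_mul, abs_abs] at hgap
  refine add_subset_add_right (convexHull_mono ?_) hgap
  rintro _ ⟨x, hx, rfl⟩
  exact mem_biUnion hx (mem_iUnion.2 ⟨i, rfl⟩)

end InnerProductSpace

theorem psi_convexHull_subset_general (d M : ℕ) (K S Δt : ℝ)
    (f : Fin M → EuclideanSpace ℝ (Fin d) → EuclideanSpace ℝ (Fin d))
    (hK : ∀ i x, ‖f i x‖ ≤ K)
    (hS : ∀ i x z, ‖f i x - f i z - fderiv ℝ (f i) z (x - z)‖ ≤ S * ‖x - z‖ ^ 2)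
    (z : EuclideanSpace ℝ (Fin d)) :
    setImage (fun x => {x} + Δt • convexHull ℝ (Set.range fun i => f i x))
        (convexHull ℝ (iterMap (fun x => ⋃ i, {x + Δt • f i x}) (M - 1) z)) ⊆
      convexHull ℝ (iterMap (fun x => ⋃ i, {x + Δt • f i x}) M z) +
        (S * K ^ 2 * ((M : ℝ) * ((M : ℝ) - 1) * (2 * (M : ℝ) - 1) / 3) * Δt ^ 3) •
          Metric.closedBall (0 : EuclideanSpace ℝ (Fin d)) 1 := by
  refine iUnion₂_subset fun y hy => ?_
  dsimp only
  rw [← convexHull_singleton (𝕜 := ℝ) y, ← convexHull_smul, ← convexHull_add]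
  refine convexHull_min ?_ ((convex_convexHull ℝ _).add ((convex_closedBall 0 1).smul _))
  rintro _ ⟨_, rfl, _, ⟨_, ⟨i, rfl⟩, rfl⟩, rfl⟩
  obtain ⟨n, rfl⟩ : ∃ n, M = n + 1 := ⟨M - 1, by have := i.2; omega⟩
  rw [Nat.add_sub_cancel] at hy
  rw [smul_unitClosedBall]
  refine add_subset_add_left (closedBall_subset_closedBall ?_)
    (add_smul_mem_convexHull_iterMap_succ_add_closedBall Δt hK hS hy i)
  have hsq : (n : ℝ) ^ 2 ≤ (n + 1) * n * (2 * n + 1) / 3 := by nlinarith [n.cast_nonneg (α := ℝ)]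
  calc |Δt| * |S| * (n * (|Δt| * K)) ^ 2 = |S| * K ^ 2 * |Δt| ^ 3 * n ^ 2 := by ring
    _ ≤ |S| * K ^ 2 * |Δt| ^ 3 * ((n + 1) * n * (2 * n + 1) / 3) := by gcongr
    _ = _ := by
      rw [Real.norm_eq_abs, abs_mul, abs_mul, abs_mul, abs_pow, abs_pow, sq_abs,
        abs_of_nonneg (a := _ / 3) (by push_cast; ring_nf; positivity)]
      push_cast
      ring

theorem psi_convexHull_subset (d M : ℕ) (K L S Δt : ℝ) (hΔt : 0 < Δt)
    (f : Fin M → EuclideanSpace ℝ (Fin d) → EuclideanSpace ℝ (Fin d))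
    (hdiff : ∀ i, Differentiable ℝ (f i))
    (hK : ∀ i x, ‖f i x‖ ≤ K)
    (hL : ∀ i x, ‖fderiv ℝ (f i) x‖ ≤ L)
    (hS : ∀ i x z, ‖f i x - f i z - fderiv ℝ (f i) z (x - z)‖ ≤ S * ‖x - z‖ ^ 2)
    (z : EuclideanSpace ℝ (Fin d)) :
    setImage (fun x => {x} + Δt • convexHull ℝ (Set.range fun i => f i x))
        (convexHull ℝ (iterMap (fun x => ⋃ i, {x + Δt • f i x}) (M - 1) z)) ⊆
      convexHull ℝ (iterMap (fun x => ⋃ i, {x + Δt • f i x}) M z) +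
        (S * K ^ 2 * ((M : ℝ) * ((M : ℝ) - 1) * (2 * (M : ℝ) - 1) / 3) * Δt ^ 3) •
          Metric.closedBall (0 : EuclideanSpace ℝ (Fin d)) 1 :=
  psi_convexHull_subset_general d M K S Δt f hK hS z
end

section
/- Under the hypotheses |f_i(x)| ≤ K, |f_i'(x)| ≤ L, |f_i(x)−f_i(z)−f_i'(z)(x−z)| ≤ S|x−z|² for i = 1,…,M with M ≥ d+1, and φ(x) = {x + Δt f_i(x)}_i, one has for all x₀: co(φ^M(x₀)) ⊆ ⋃_{x∈φ(x₀)} co(φ^(M−1)(x)) + R·B, where R = (8M−10)KLΔt² + (2KL²((M−1)³−(M−1))/3·(1+LΔt)^(M−3) + SK²M(M−1)(2M−1)/3)Δt³. -/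
open scoped Pointwise

/-!
A point of `co φ^M(x₀)` is an average `∑ⱼ wⱼ T(σⱼ)` of Euler trajectories `T(σ)` indexed by
words `σ` of length `M` in the `M` vector fields. Up to `O(Δt³)`,
`T(σ) = x₀ + Δt ∑ₖ f_{σₖ}(x₀) + Δt² Q(σ)`; the first-order term only sees the letter counts of
`σ`, and `Q` moves by at most `2KL(M-1)` per changed letter. By pigeonhole some letter `i` has
weighted frequency at least `1`. Replace every word `σ` by the words that start with `i` and in
which the later occurrences of `i` become a letter `a` drawn from a distribution `q`; `q` can
be chosen so that the average first-order term is unchanged while on average at most two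
letters change. The new average lies in `co φ^(M-1)(x₀ + Δt fᵢ(x₀))`, and it differs from the
old one by `O(Δt³) + 4(M-1)KLΔt²`.
-/

open Finset

namespace EulerScheme

section Trajectory

variable {E ι : Type*} [AddCommGroup E] [Module ℝ E]

def traj (h : ℝ) (f : ι → E → E) (z : E) (σ : ℕ → ι) : ℕ → E
  | 0 => z
  | k + 1 => traj h f z σ k + h • f (σ k) (traj h f z σ k)

lemma traj_congr {h : ℝ} {f : ι → E → E} {z : E} {σ τ : ℕ → ι} {n : ℕ}
    (hστ : ∀ k < n, σ k = τ k) : traj h f z σ n = traj h f z τ n := by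
  induction n with
  | zero => rfl
  | succ n ih =>
    simp only [traj, ih fun k hk => hστ k (by omega), hστ n n.lt_succ_self]

lemma traj_mem_iterMap (h : ℝ) (f : ι → E → E) (z : E) (σ : ℕ → ι) (n : ℕ) :
    traj h f z σ n ∈ iterMap (fun x => ⋃ i, {x + h • f i x}) n z := by
  induction n with
  | zero => exact rfl
  | succ n ih =>
    simp only [iterMap, setImage, Set.mem_iUnion]
    exact ⟨_, ih, σ n, rfl⟩

lemma mem_iterMap_iff_exists_traj [Nonempty ι] {h : ℝ} {f : ι → E → E} {z x : E} {n : ℕ} :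
    x ∈ iterMap (fun x => ⋃ i, {x + h • f i x}) n z ↔ ∃ σ : ℕ → ι, traj h f z σ n = x := by
  refine ⟨fun hx => ?_, fun ⟨σ, hσ⟩ => hσ ▸ traj_mem_iterMap h f z σ n⟩
  induction n generalizing x with
  | zero => exact ⟨fun _ => Classical.arbitrary ι, hx.symm⟩
  | succ n ih =>
    simp only [iterMap, setImage, Set.mem_iUnion, Set.mem_singleton_iff] at hx
    obtain ⟨y, hy, i, rfl⟩ := hx
    obtain ⟨σ, rfl⟩ := ih hy
    refine ⟨Function.update σ n i, ?_⟩
    rw [traj, traj_congr fun k hk => Function.update_of_ne hk.ne i σ, Function.update_self]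

lemma traj_succ_eq_traj_shift (h : ℝ) (f : ι → E → E) (z : E) (σ : ℕ → ι) (n : ℕ) :
    traj h f z σ (n + 1) = traj h f (z + h • f (σ 0) z) (fun k => σ (k + 1)) n := by
  induction n with
  | zero => rfl
  | succ n ih => rw [traj, ih]; rfl

lemma traj_succ_mem_iterMap (h : ℝ) (f : ι → E → E) (z : E) (σ : ℕ → ι) (n : ℕ) :
    traj h f z σ (n + 1) ∈ iterMap (fun x => ⋃ i, {x + h • f i x}) n (z + h • f (σ 0) z) :=
  traj_succ_eq_traj_shift h f z σ n ▸ traj_mem_iterMap _ _ _ _ n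

end Trajectory

section Words

variable {ι : Type*} [DecidableEq ι]

def diffCount (n : ℕ) (σ τ : ℕ → ι) : ℕ := #{k ∈ range n | σ k ≠ τ k}

def tailCount (m : ℕ) (i : ι) (τ : ℕ → ι) : ℕ := #{k ∈ range m | τ (k + 1) = i}

def frontSwap (i a : ι) (τ : ℕ → ι) : ℕ → ι
  | 0 => i
  | k + 1 => if τ (k + 1) = i then a else τ (k + 1)

lemma diffCount_frontSwap_le (i a : ι) (τ : ℕ → ι) (m : ℕ) :
    diffCount (m + 1) τ (frontSwap i a τ) ≤ 1 + if a = i then 0 else tailCount m i τ := by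
  rw [diffCount, card_filter, sum_range_succ', add_comm]
  refine add_le_add (by split_ifs <;> simp) ?_
  split_ifs with hai
  · refine (sum_eq_zero fun k _ => ?_).le
    by_cases hk : τ (k + 1) = i <;> simp [frontSwap, hk, hai]
  · rw [tailCount, card_filter]
    refine sum_le_sum fun k _ => ?_
    by_cases hk : τ (k + 1) = i <;> simp [frontSwap, hk, Ne.symm hai]

end Words

/- `traj h f x₀ σ n = x₀ + h • linTerm f x₀ σ n + h ^ 2 • quadTerm A f x₀ σ n + O(h ^ 3)`
when `A i` is the derivative of `f i` at `x₀`. -/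

section LinTerm

variable {E ι : Type*}

def linTerm [AddCommMonoid E] (f : ι → E → E) (x₀ : E) (σ : ℕ → ι) (n : ℕ) : E :=
  ∑ k ∈ range n, f (σ k) x₀

lemma linTerm_succ [AddCommMonoid E] (f : ι → E → E) (x₀ : E) (σ : ℕ → ι) (n : ℕ) :
    linTerm f x₀ σ (n + 1) = linTerm f x₀ σ n + f (σ n) x₀ :=
  sum_range_succ _ _

lemma linTerm_frontSwap [AddCommGroup E] [DecidableEq ι] (f : ι → E → E) (x₀ : E) (i a : ι)
    (τ : ℕ → ι) (m : ℕ) :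
    linTerm f x₀ (frontSwap i a τ) (m + 1)
      = linTerm f x₀ τ (m + 1) + tailCount m i τ • (f a x₀ - f i x₀) - (f (τ 0) x₀ - f i x₀) := by
  have hstep (k : ℕ) : f (frontSwap i a τ (k + 1)) x₀
      = f (τ (k + 1)) x₀ + if τ (k + 1) = i then f a x₀ - f i x₀ else 0 := by
    by_cases hk : τ (k + 1) = i <;> simp [frontSwap, hk]
  simp only [linTerm, sum_range_succ', hstep, sum_add_distrib, ← sum_filter, sum_const, tailCount]
  simp only [frontSwap]
  abel

variable [SeminormedAddCommGroup E] {K : ℝ} {f : ι → E → E} {x₀ : E}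

lemma norm_linTerm_le (hK : ∀ i, ‖f i x₀‖ ≤ K) (σ : ℕ → ι) (n : ℕ) :
    ‖linTerm f x₀ σ n‖ ≤ n * K :=
  (norm_sum_le_of_le _ fun k _ => hK (σ k)).trans_eq (by simp)

lemma norm_linTerm_sub_le [DecidableEq ι] (hK : ∀ i, ‖f i x₀‖ ≤ K) (σ τ : ℕ → ι) (n : ℕ) :
    ‖linTerm f x₀ σ n - linTerm f x₀ τ n‖ ≤ 2 * K * diffCount n σ τ := by
  rw [linTerm, linTerm, ← sum_sub_distrib, diffCount, natCast_card_filter, mul_sum]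
  refine norm_sum_le_of_le _ fun k _ => ?_
  by_cases hk : σ k = τ k
  · simp [hk]
  · simpa [hk, two_mul] using norm_sub_le_of_le (hK (σ k)) (hK (τ k))

end LinTerm

lemma sum_range_sum_range_add_mul_self (χ : ℕ → ℝ) (n : ℕ) :
    ∑ k ∈ range n, (∑ l ∈ range k, χ l + k * χ k) = (n - 1) * ∑ k ∈ range n, χ k := by
  induction n with
  | zero => simp
  | succ n ih => rw [sum_range_succ, ih, sum_range_succ (f := χ)]; push_cast; ring

noncomputable def remainderCoeff (K L S : ℝ) (n : ℕ) : ℝ :=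
  K * L ^ 2 * (n * (n - 1) * (n - 2) / 6) + S * K ^ 2 * (n * (n - 1) * (2 * n - 1) / 6)

section Taylor

variable {E ι : Type*} [NormedAddCommGroup E] [NormedSpace ℝ E]

def quadTerm (A : ι → E →L[ℝ] E) (f : ι → E → E) (x₀ : E) (σ : ℕ → ι) (n : ℕ) :
    E :=
  ∑ k ∈ range n, A (σ k) (linTerm f x₀ σ k)

variable {h K L S : ℝ} {f : ι → E → E} {x₀ : E}

lemma quadTerm_succ (A : ι → E →L[ℝ] E) (σ : ℕ → ι) (n : ℕ) :
    quadTerm A f x₀ σ (n + 1) = quadTerm A f x₀ σ n + A (σ n) (linTerm f x₀ σ n) :=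
  sum_range_succ _ _

lemma norm_smul_le_of_le {v : E} {c : ℝ} (hh : 0 ≤ h) (hv : ‖v‖ ≤ c) : ‖h • v‖ ≤ h * c :=
  (norm_smul_of_nonneg hh v).trans_le (mul_le_mul_of_nonneg_left hv hh)

lemma norm_traj_sub_le (hh : 0 ≤ h) (hK : ∀ i x, ‖f i x‖ ≤ K) (σ : ℕ → ι) (n : ℕ) :
    ‖traj h f x₀ σ n - x₀‖ ≤ n * K * h := by
  induction n with
  | zero => simp [traj]
  | succ n ih =>
    calc ‖traj h f x₀ σ (n + 1) - x₀‖
        = ‖(traj h f x₀ σ n - x₀) + h • f (σ n) (traj h f x₀ σ n)‖ := by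
          rw [traj, add_sub_right_comm]
      _ ≤ n * K * h + h * K := norm_add_le_of_le ih (norm_smul_le_of_le hh (hK _ _))
      _ = (n + 1 : ℕ) * K * h := by push_cast; ring

lemma norm_traj_sub_linTerm_le (hh : 0 ≤ h) (hK : ∀ i x, ‖f i x‖ ≤ K) (hL0 : 0 ≤ L)
    (hLip : ∀ i x y, ‖f i x - f i y‖ ≤ L * ‖x - y‖) (σ : ℕ → ι) (n : ℕ) :
    ‖traj h f x₀ σ n - (x₀ + h • linTerm f x₀ σ n)‖ ≤ K * L * (n * (n - 1) / 2) * h ^ 2 := by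
  induction n with
  | zero => simp [traj, linTerm]
  | succ n ih =>
    have hstep : ‖f (σ n) (traj h f x₀ σ n) - f (σ n) x₀‖ ≤ L * (n * K * h) :=
      (hLip _ _ _).trans (mul_le_mul_of_nonneg_left (norm_traj_sub_le hh hK σ n) hL0)
    calc ‖traj h f x₀ σ (n + 1) - (x₀ + h • linTerm f x₀ σ (n + 1))‖
        = ‖(traj h f x₀ σ n - (x₀ + h • linTerm f x₀ σ n))
            + h • (f (σ n) (traj h f x₀ σ n) - f (σ n) x₀)‖ := by
          rw [traj, linTerm_succ]
          congr 1
          module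
      _ ≤ K * L * (n * (n - 1) / 2) * h ^ 2 + h * (L * (n * K * h)) :=
          norm_add_le_of_le ih (norm_smul_le_of_le hh hstep)
      _ = K * L * ((n + 1 : ℕ) * ((n + 1 : ℕ) - 1) / 2) * h ^ 2 := by push_cast; ring

lemma norm_traj_sub_quadTerm_le {A : ι → E →L[ℝ] E} (hh : 0 ≤ h) (hK : ∀ i x, ‖f i x‖ ≤ K)
    (hL0 : 0 ≤ L) (hS0 : 0 ≤ S) (hLip : ∀ i x y, ‖f i x - f i y‖ ≤ L * ‖x - y‖)
    (hA : ∀ i, ‖A i‖ ≤ L) (hS : ∀ i x, ‖f i x - f i x₀ - A i (x - x₀)‖ ≤ S * ‖x - x₀‖ ^ 2)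
    (σ : ℕ → ι) (n : ℕ) :
    ‖traj h f x₀ σ n - (x₀ + h • linTerm f x₀ σ n + h ^ 2 • quadTerm A f x₀ σ n)‖
      ≤ remainderCoeff K L S n * h ^ 3 := by
  induction n with
  | zero => simp [traj, linTerm, quadTerm, remainderCoeff]
  | succ n ih =>
    set x := traj h f x₀ σ n
    have hTaylor : ‖f (σ n) x - f (σ n) x₀ - A (σ n) (x - x₀)‖ ≤ S * (n * K * h) ^ 2 :=
      (hS _ _).trans (mul_le_mul_of_nonneg_left
        (pow_le_pow_left₀ (norm_nonneg _) (norm_traj_sub_le hh hK σ n) 2) hS0)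
    have hlin : ‖A (σ n) (x - (x₀ + h • linTerm f x₀ σ n))‖
        ≤ L * (K * L * (n * (n - 1) / 2) * h ^ 2) :=
      (A (σ n)).le_of_opNorm_le_of_le (hA _) (norm_traj_sub_linTerm_le hh hK hL0 hLip σ n)
    calc ‖traj h f x₀ σ (n + 1)
          - (x₀ + h • linTerm f x₀ σ (n + 1) + h ^ 2 • quadTerm A f x₀ σ (n + 1))‖
        = ‖(x - (x₀ + h • linTerm f x₀ σ n + h ^ 2 • quadTerm A f x₀ σ n))
            + h • ((f (σ n) x - f (σ n) x₀ - A (σ n) (x - x₀))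
              + A (σ n) (x - (x₀ + h • linTerm f x₀ σ n)))‖ := by
          rw [traj, linTerm_succ, quadTerm_succ, map_sub, map_sub, map_add, map_smul]
          congr 1
          module
      _ ≤ remainderCoeff K L S n * h ^ 3
            + h * (S * (n * K * h) ^ 2 + L * (K * L * (n * (n - 1) / 2) * h ^ 2)) :=
          norm_add_le_of_le ih (norm_smul_le_of_le hh (norm_add_le_of_le hTaylor hlin))
      _ = remainderCoeff K L S (n + 1) * h ^ 3 := by simp only [remainderCoeff]; push_cast; ring

variable [DecidableEq ι]

lemma norm_quadTerm_sub_le {A : ι → E →L[ℝ] E} (hK : ∀ i, ‖f i x₀‖ ≤ K) (hA : ∀ i, ‖A i‖ ≤ L)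
    (σ τ : ℕ → ι) (n : ℕ) :
    ‖quadTerm A f x₀ σ n - quadTerm A f x₀ τ n‖ ≤ 2 * K * L * (n - 1) * diffCount n σ τ := by
  set χ : ℕ → ℝ := fun k => if σ k ≠ τ k then 1 else 0
  have hcount (k : ℕ) : (diffCount k σ τ : ℝ) = ∑ l ∈ range k, χ l := natCast_card_filter _ _
  have hterm (k : ℕ) : ‖A (σ k) (linTerm f x₀ σ k) - A (τ k) (linTerm f x₀ τ k)‖
      ≤ 2 * K * L * (∑ l ∈ range k, χ l + k * χ k) := by
    have hswitch : ‖(A (σ k) - A (τ k)) (linTerm f x₀ τ k)‖ ≤ 2 * K * L * (k * χ k) := by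
      by_cases hk : σ k = τ k
      · simp [χ, hk]
      · have hnorm : ‖A (σ k) - A (τ k)‖ ≤ 2 * L := by
          simpa [two_mul] using norm_sub_le_of_le (hA (σ k)) (hA (τ k))
        calc ‖(A (σ k) - A (τ k)) (linTerm f x₀ τ k)‖ ≤ 2 * L * (k * K) :=
              (A (σ k) - A (τ k)).le_of_opNorm_le_of_le hnorm (norm_linTerm_le hK τ k)
          _ = 2 * K * L * (k * χ k) := by simp [χ, hk]; ring
    have hdrift : ‖A (σ k) (linTerm f x₀ σ k - linTerm f x₀ τ k)‖
        ≤ L * (2 * K * diffCount k σ τ) :=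
      (A (σ k)).le_of_opNorm_le_of_le (hA _) (norm_linTerm_sub_le hK σ τ k)
    calc ‖A (σ k) (linTerm f x₀ σ k) - A (τ k) (linTerm f x₀ τ k)‖
        = ‖A (σ k) (linTerm f x₀ σ k - linTerm f x₀ τ k)
            + (A (σ k) - A (τ k)) (linTerm f x₀ τ k)‖ := by
          simp only [map_sub, FunLike.coe_sub, Pi.sub_apply, sub_add_sub_cancel]
      _ ≤ L * (2 * K * diffCount k σ τ) + 2 * K * L * (k * χ k) :=
          norm_add_le_of_le hdrift hswitch
      _ = 2 * K * L * (∑ l ∈ range k, χ l + k * χ k) := by rw [hcount]; ring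
  calc ‖quadTerm A f x₀ σ n - quadTerm A f x₀ τ n‖
      ≤ ∑ k ∈ range n, 2 * K * L * (∑ l ∈ range k, χ l + k * χ k) := by
        rw [quadTerm, quadTerm, ← sum_sub_distrib]
        exact norm_sum_le_of_le _ fun k _ => hterm k
    _ = 2 * K * L * (n - 1) * diffCount n σ τ := by
        rw [← mul_sum, sum_range_sum_range_add_mul_self, hcount]; ring

lemma norm_traj_sub_traj_sub_le {A : ι → E →L[ℝ] E} (hh : 0 ≤ h) (hK : ∀ i x, ‖f i x‖ ≤ K)
    (hS0 : 0 ≤ S) (hLip : ∀ i x y, ‖f i x - f i y‖ ≤ L * ‖x - y‖)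
    (hA : ∀ i, ‖A i‖ ≤ L) (hS : ∀ i x, ‖f i x - f i x₀ - A i (x - x₀)‖ ≤ S * ‖x - x₀‖ ^ 2)
    (σ τ : ℕ → ι) (n : ℕ) :
    ‖traj h f x₀ σ n - traj h f x₀ τ n - h • (linTerm f x₀ σ n - linTerm f x₀ τ n)‖
      ≤ 2 * remainderCoeff K L S n * h ^ 3 + 2 * K * L * (n - 1) * diffCount n σ τ * h ^ 2 := by
  have hL0 : 0 ≤ L := (norm_nonneg _).trans (hA (σ 0))
  have hσ := norm_traj_sub_quadTerm_le hh hK hL0 hS0 hLip hA hS σ n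
  have hτ := norm_traj_sub_quadTerm_le hh hK hL0 hS0 hLip hA hS τ n
  have hquad := norm_smul_le_of_le (sq_nonneg h)
    (norm_quadTerm_sub_le (fun i => hK i x₀) hA σ τ n)
  calc _ = ‖(traj h f x₀ σ n - (x₀ + h • linTerm f x₀ σ n + h ^ 2 • quadTerm A f x₀ σ n))
          - (traj h f x₀ τ n - (x₀ + h • linTerm f x₀ τ n + h ^ 2 • quadTerm A f x₀ τ n))
          + h ^ 2 • (quadTerm A f x₀ σ n - quadTerm A f x₀ τ n)‖ := by congr 1; module
    _ ≤ _ := norm_add_le_of_le (norm_sub_le_of_le hσ hτ) hquad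
    _ = _ := by ring

lemma norm_sum_smul_traj_sub_le {α : Type*} [Fintype α] {A : ι → E →L[ℝ] E} (hh : 0 ≤ h)
    (hK : ∀ i x, ‖f i x‖ ≤ K) (hS0 : 0 ≤ S) (hLip : ∀ i x y, ‖f i x - f i y‖ ≤ L * ‖x - y‖)
    (hA : ∀ i, ‖A i‖ ≤ L) (hS : ∀ i x, ‖f i x - f i x₀ - A i (x - x₀)‖ ≤ S * ‖x - x₀‖ ^ 2)
    {μ : α → ℝ} (hμ0 : ∀ p, 0 ≤ μ p) (hμ1 : ∑ p, μ p = 1) (σ τ : α → ℕ → ι) (n : ℕ)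
    (hbal : ∑ p, μ p • (linTerm f x₀ (σ p) n - linTerm f x₀ (τ p) n) = 0) :
    ‖∑ p, μ p • traj h f x₀ (σ p) n - ∑ p, μ p • traj h f x₀ (τ p) n‖
      ≤ 2 * remainderCoeff K L S n * h ^ 3
        + 2 * K * L * (n - 1) * h ^ 2 * ∑ p, μ p * diffCount n (σ p) (τ p) := by
  have hsplit : ∑ p, μ p • (traj h f x₀ (σ p) n - traj h f x₀ (τ p) n
      - h • (linTerm f x₀ (σ p) n - linTerm f x₀ (τ p) n))
      = ∑ p, μ p • traj h f x₀ (σ p) n - ∑ p, μ p • traj h f x₀ (τ p) n := by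
    simp only [smul_sub, sum_sub_distrib, smul_comm (μ _) h, ← smul_sum] at hbal ⊢
    rw [← smul_sub, hbal, smul_zero, sub_zero]
  calc ‖∑ p, μ p • traj h f x₀ (σ p) n - ∑ p, μ p • traj h f x₀ (τ p) n‖
      ≤ ∑ p, μ p * (2 * remainderCoeff K L S n * h ^ 3
          + 2 * K * L * (n - 1) * diffCount n (σ p) (τ p) * h ^ 2) :=
        hsplit ▸ norm_sum_le_of_le _ fun p _ => norm_smul_le_of_le (hμ0 p)
          (norm_traj_sub_traj_sub_le hh hK hS0 hLip hA hS _ _ _)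
    _ = _ := by
        simp only [mul_add, sum_add_distrib, ← sum_mul, hμ1, one_mul, mul_sum]
        exact congrArg _ (sum_congr rfl fun p _ => by ring)

end Taylor

section Weights

variable {ι : Type*} [Fintype ι] [DecidableEq ι]

lemma exists_weights_mul_eq {ν : ι → ℝ} (hν0 : ∀ a, 0 ≤ ν a) (hν1 : ∑ a, ν a = 1) {c : ℝ}
    (hc : 0 ≤ c) {i : ι} (hi : 1 ≤ c + ν i) :
    ∃ q : ι → ℝ, (∀ a, 0 ≤ q a) ∧ ∑ a, q a = 1 ∧ ∀ a ≠ i, c * q a = ν a := by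
  have hrest : ∑ a ∈ univ.erase i, ν a = 1 - ν i := by
    rw [← hν1, ← add_sum_erase univ ν (mem_univ i)]; ring
  rcases hc.eq_or_lt with rfl | hc
  · refine ⟨Pi.single i 1, fun a => ?_, by simp, fun a ha => ?_⟩
    · by_cases ha : a = i <;> simp [ha]
    · have hzero := (sum_eq_zero_iff_of_nonneg fun b _ => hν0 b).1
        (le_antisymm (by linarith) (sum_nonneg fun b _ => hν0 b))
      simpa using (hzero a (mem_erase.2 ⟨ha, mem_univ a⟩)).symm
  · refine ⟨fun a => if a = i then 1 - (1 - ν i) / c else ν a / c, fun a => ?_, ?_,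
      fun a ha => by simp [ha, mul_div_cancel₀ _ hc.ne']⟩
    · dsimp only
      split_ifs
      · exact sub_nonneg.2 ((div_le_one hc).2 (by linarith))
      · exact div_nonneg (hν0 a) hc.le
    · rw [← add_sum_erase _ _ (mem_univ i), if_pos rfl,
        sum_congr rfl fun a ha => if_neg (ne_of_mem_erase ha), ← sum_div, hrest]
      ring

lemma smul_sum_smul_eq_of_mul_eq {M : Type*} [AddCommGroup M] [Module ℝ M] {c : ℝ}
    {q ν : ι → ℝ} {i : ι} (h : ∀ a ≠ i, c * q a = ν a) (v : ι → M) (hv : v i = 0) :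
    c • ∑ a, q a • v a = ∑ a, ν a • v a := by
  rw [smul_sum]
  refine sum_congr rfl fun a _ => ?_
  by_cases ha : a = i
  · simp [ha, hv]
  · rw [smul_smul, h a ha]

end Weights

section FrontSwapWeights

variable {ι κ : Type*} [DecidableEq ι] [Fintype κ]

def headWeight (w : κ → ℝ) (σ : κ → ℕ → ι) (a : ι) : ℝ := ∑ j, if σ j 0 = a then w j else 0

def tailWeight (m : ℕ) (w : κ → ℝ) (σ : κ → ℕ → ι) (i : ι) : ℝ :=
  ∑ j, w j * tailCount m i (σ j)

variable {w : κ → ℝ} {σ : κ → ℕ → ι} {m : ℕ} {i : ι} {q : ι → ℝ}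

lemma headWeight_nonneg (hw0 : ∀ j, 0 ≤ w j) (σ : κ → ℕ → ι) (a : ι) : 0 ≤ headWeight w σ a :=
  sum_nonneg fun j _ => by split_ifs <;> simp [hw0 j]

lemma tailWeight_nonneg (hw0 : ∀ j, 0 ≤ w j) (m : ℕ) (σ : κ → ℕ → ι) (i : ι) :
    0 ≤ tailWeight m w σ i :=
  sum_nonneg fun j _ => mul_nonneg (hw0 j) (Nat.cast_nonneg _)

variable [Fintype ι]

lemma sum_smul_apply_head {M : Type*} [AddCommGroup M] [Module ℝ M] (w : κ → ℝ)
    (σ : κ → ℕ → ι) (v : ι → M) : ∑ j, w j • v (σ j 0) = ∑ a, headWeight w σ a • v a := by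
  simp only [headWeight, sum_smul, ite_smul, zero_smul]
  rw [sum_comm]
  simp

lemma sum_headWeight (hw1 : ∑ j, w j = 1) (σ : κ → ℕ → ι) : ∑ a, headWeight w σ a = 1 := by
  simpa [hw1] using (sum_smul_apply_head w σ fun _ => (1 : ℝ)).symm

lemma sum_tailCount (m : ℕ) (τ : ℕ → ι) : ∑ i, tailCount m i τ = m := by
  simp only [tailCount]
  simpa using (card_eq_sum_card_fiberwise (f := fun k => τ (k + 1)) (s := range m)
    (t := univ) fun _ _ => mem_univ _).symm

lemma exists_one_le_tailWeight_add_headWeight [Nonempty ι] (hm : Fintype.card ι ≤ m + 1)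
    (hw1 : ∑ j, w j = 1) (σ : κ → ℕ → ι) : ∃ i, 1 ≤ tailWeight m w σ i + headWeight w σ i := by
  have htotal : ∑ i, (tailWeight m w σ i + headWeight w σ i) = m + 1 := by
    simp only [sum_add_distrib, sum_headWeight hw1, tailWeight]
    rw [sum_comm]
    simp_rw [← mul_sum, ← Nat.cast_sum, sum_tailCount, ← sum_mul, hw1, one_mul]
  obtain ⟨i, -, hi⟩ := exists_le_of_sum_le (s := univ) (f := fun _ => (1 : ℝ)) univ_nonempty
    (by rw [htotal]; simpa using (Nat.cast_le (α := ℝ)).2 hm)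
  exact ⟨i, hi⟩

lemma sum_sum_smul_linTerm_sub_frontSwap {E : Type*} [AddCommGroup E] [Module ℝ E]
    (f : ι → E → E) (x₀ : E) (hq1 : ∑ a, q a = 1)
    (hq : ∀ a ≠ i, tailWeight m w σ i * q a = headWeight w σ a) :
    ∑ j, ∑ a, (w j * q a) •
      (linTerm f x₀ (σ j) (m + 1) - linTerm f x₀ (frontSwap i a (σ j)) (m + 1)) = 0 := by
  set v : ι → E := fun a => f a x₀ - f i x₀
  have hinner (j : κ) : ∑ a, (w j * q a) •
      (linTerm f x₀ (σ j) (m + 1) - linTerm f x₀ (frontSwap i a (σ j)) (m + 1))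
      = w j • v (σ j 0) - (w j * tailCount m i (σ j)) • ∑ a, q a • v a := by
    have hterm (a : ι) : (w j * q a) •
        (linTerm f x₀ (σ j) (m + 1) - linTerm f x₀ (frontSwap i a (σ j)) (m + 1))
        = q a • (w j • v (σ j 0)) - (w j * tailCount m i (σ j)) • (q a • v a) := by
      rw [linTerm_frontSwap, ← Nat.cast_smul_eq_nsmul ℝ]
      module
    rw [sum_congr rfl fun a _ => hterm a, sum_sub_distrib, ← smul_sum, ← sum_smul, hq1, one_smul]
  rw [sum_congr rfl fun j _ => hinner j, sum_sub_distrib, ← sum_smul, ← tailWeight,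
    smul_sum_smul_eq_of_mul_eq hq v (sub_self _), sum_smul_apply_head, sub_self]

lemma sum_sum_mul_diffCount_frontSwap_le (hw0 : ∀ j, 0 ≤ w j) (hw1 : ∑ j, w j = 1)
    (hq0 : ∀ a, 0 ≤ q a) (hq1 : ∑ a, q a = 1)
    (hq : ∀ a ≠ i, tailWeight m w σ i * q a = headWeight w σ a) :
    ∑ j, ∑ a, w j * q a * diffCount (m + 1) (σ j) (frontSwap i a (σ j)) ≤ 2 := by
  set u : ι → ℝ := fun a => if a = i then 0 else 1
  calc ∑ j, ∑ a, w j * q a * diffCount (m + 1) (σ j) (frontSwap i a (σ j))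
      ≤ ∑ j, ∑ a, w j * q a * (1 + tailCount m i (σ j) * u a) := by
        gcongr with j _ a _
        · exact mul_nonneg (hw0 j) (hq0 a)
        · have := diffCount_frontSwap_le i a (σ j) m
          by_cases ha : a = i <;> simp only [u, ha, if_true, if_false] at this ⊢ <;>
            exact_mod_cast (by simpa using this)
    _ = 1 + tailWeight m w σ i • ∑ a, q a • u a := by
        simp only [smul_eq_mul, tailWeight, mul_add, mul_one, sum_add_distrib, ← mul_sum, hq1,
          hw1, sum_mul]
        refine congrArg _ (sum_congr rfl fun j _ => ?_)
        rw [mul_sum]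
        exact sum_congr rfl fun a _ => by ring
    _ = 1 + ∑ a, headWeight w σ a • u a := by rw [smul_sum_smul_eq_of_mul_eq hq u (if_pos rfl)]
    _ ≤ 1 + ∑ a, headWeight w σ a := by
        gcongr with a
        by_cases ha : a = i <;> simp [u, ha, headWeight_nonneg hw0]
    _ = 2 := by rw [sum_headWeight hw1]; norm_num

end FrontSwapWeights

lemma nonneg_of_forall_norm_le_mul_norm_sub_sq {E F : Type*} [NormedAddCommGroup E]
    [Nontrivial E] [SeminormedAddCommGroup F] {g : E → F} {S : ℝ} {z : E}
    (hg : ∀ x, ‖g x‖ ≤ S * ‖x - z‖ ^ 2) : 0 ≤ S := by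
  obtain ⟨x, hx⟩ := exists_ne z
  exact nonneg_of_mul_nonneg_left ((norm_nonneg _).trans (hg x))
    (pow_pos (norm_pos_iff.2 (sub_ne_zero.2 hx)) 2)

lemma commutation_radius_le {K L S h : ℝ} {M : ℕ} (hM : 2 ≤ M) (hK : 0 ≤ K) (hL : 0 ≤ L)
    (hh : 0 ≤ h) :
    2 * remainderCoeff K L S M * h ^ 3 + 4 * K * L * (M - 1) * h ^ 2 ≤
      (8 * (M : ℝ) - 10) * K * L * h ^ 2 +
        (2 * K * L ^ 2 * (((M : ℝ) - 1) ^ 3 - ((M : ℝ) - 1)) / 3 * (1 + L * h) ^ (M - 3) +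
          S * K ^ 2 * ((M : ℝ) * ((M : ℝ) - 1) * (2 * (M : ℝ) - 1)) / 3) * h ^ 3 := by
  have hM' : (2 : ℝ) ≤ M := by exact_mod_cast hM
  have hpow : 1 ≤ (1 + L * h) ^ (M - 3) := one_le_pow₀ (le_add_of_nonneg_right (by positivity))
  have h₁ : 0 ≤ (4 * M - 6) * (K * L * h ^ 2) := mul_nonneg (by linarith) (by positivity)
  have h₂ : 0 ≤ K * L ^ 2 * h ^ 3 * (M * (M - 1) * (M - 2)) * (2 * (1 + L * h) ^ (M - 3) - 1) :=
    mul_nonneg (mul_nonneg (by positivity) (mul_nonneg (by nlinarith) (by linarith)))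
      (by linarith)
  simp only [remainderCoeff]
  linarith [h₁, h₂]

variable {E ι : Type*} [NormedAddCommGroup E] [NormedSpace ℝ E] [Fintype ι] [DecidableEq ι]
  [Nonempty ι] {h K L S : ℝ} {f : ι → E → E} {x₀ : E}

theorem convexHull_iterMap_subset {n : ℕ} (hn : Fintype.card ι ≤ n) {A : ι → E →L[ℝ] E}
    (hh : 0 ≤ h) (hK : ∀ i x, ‖f i x‖ ≤ K) (hS0 : 0 ≤ S)
    (hLip : ∀ i x y, ‖f i x - f i y‖ ≤ L * ‖x - y‖) (hA : ∀ i, ‖A i‖ ≤ L)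
    (hS : ∀ i x, ‖f i x - f i x₀ - A i (x - x₀)‖ ≤ S * ‖x - x₀‖ ^ 2) :
    convexHull ℝ (iterMap (fun x => ⋃ i, {x + h • f i x}) n x₀) ⊆
      (⋃ i, convexHull ℝ (iterMap (fun x => ⋃ i, {x + h • f i x}) (n - 1) (x₀ + h • f i x₀))) +
        Metric.closedBall 0 (2 * remainderCoeff K L S n * h ^ 3 + 4 * K * L * (n - 1) * h ^ 2) := by
  obtain ⟨m, rfl⟩ := Nat.exists_eq_add_one.2 (Fintype.card_pos.trans_le hn)
  intro x hx
  obtain ⟨κ, _, w, z, hw0, hw1, hz, rfl⟩ := mem_convexHull_iff_exists_fintype.1 hx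
  choose σ hσ using fun j => mem_iterMap_iff_exists_traj.1 (hz j)
  obtain ⟨i, hi⟩ := exists_one_le_tailWeight_add_headWeight hn hw1 σ
  obtain ⟨q, hq0, hq1, hq⟩ := exists_weights_mul_eq (headWeight_nonneg hw0 σ)
    (sum_headWeight hw1 σ) (tailWeight_nonneg hw0 m σ i) hi
  set μ : κ × ι → ℝ := fun p => w p.1 * q p.2
  set τ : κ × ι → ℕ → ι := fun p => frontSwap i p.2 (σ p.1)
  have hμ0 (p : κ × ι) : 0 ≤ μ p := mul_nonneg (hw0 _) (hq0 _)
  have hμ1 : ∑ p, μ p = 1 := by simp [μ, Fintype.sum_prod_type, ← mul_sum, hq1, hw1]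
  have hx : ∑ j, w j • z j = ∑ p, μ p • traj h f x₀ (σ p.1) (m + 1) := by
    rw [Fintype.sum_prod_type]
    refine sum_congr rfl fun j _ => ?_
    dsimp only [μ]
    rw [← sum_smul, ← mul_sum, hq1, mul_one, hσ]
  have hbal : ∑ p, μ p • (linTerm f x₀ (σ p.1) (m + 1) - linTerm f x₀ (τ p) (m + 1)) = 0 := by
    rw [Fintype.sum_prod_type]
    exact sum_sum_smul_linTerm_sub_frontSwap f x₀ hq1 hq
  have hcost : ∑ p, μ p * diffCount (m + 1) (σ p.1) (τ p) ≤ 2 := by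
    rw [Fintype.sum_prod_type]
    exact sum_sum_mul_diffCount_frontSwap_le hw0 hw1 hq0 hq1 hq
  refine Set.mem_add.2 ⟨∑ p, μ p • traj h f x₀ (τ p) (m + 1), Set.mem_iUnion.2 ⟨i, ?_⟩, _, ?_,
    add_sub_cancel _ _⟩
  · rw [Nat.add_sub_cancel]
    exact (convex_convexHull ℝ _).sum_mem (fun p _ => hμ0 p) hμ1
      fun p _ => subset_convexHull ℝ _ (traj_succ_mem_iterMap h f x₀ (τ p) m)
  have hD : 0 ≤ 2 * K * L * ((m + 1 : ℕ) - 1) * h ^ 2 := by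
    have hK0 := (norm_nonneg _).trans (hK i x₀)
    have hL0 := (norm_nonneg _).trans (hA i)
    push_cast; rw [add_sub_cancel_right]; positivity
  rw [mem_closedBall_zero_iff, hx]
  linarith [mul_le_mul_of_nonneg_left hcost hD,
    norm_sum_smul_traj_sub_le hh hK hS0 hLip hA hS hμ0 hμ1 (fun p => σ p.1) τ (m + 1) hbal]

end EulerScheme

open EulerScheme in
theorem convexHull_commutation_estimate (d M : ℕ) (hM : d + 1 ≤ M) (K L S Δt : ℝ)
    (hΔt : 0 < Δt)
    (f : Fin M → EuclideanSpace ℝ (Fin d) → EuclideanSpace ℝ (Fin d))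
    (hdiff : ∀ i, Differentiable ℝ (f i))
    (hK : ∀ i x, ‖f i x‖ ≤ K)
    (hL : ∀ i x, ‖fderiv ℝ (f i) x‖ ≤ L)
    (hS : ∀ i x z, ‖f i x - f i z - fderiv ℝ (f i) z (x - z)‖ ≤ S * ‖x - z‖ ^ 2)
    (x₀ : EuclideanSpace ℝ (Fin d)) :
    convexHull ℝ (iterMap (fun x => ⋃ i, {x + Δt • f i x}) M x₀) ⊆
      (⋃ i : Fin M, convexHull ℝ
          (iterMap (fun x => ⋃ j, {x + Δt • f j x}) (M - 1) (x₀ + Δt • f i x₀))) +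
        ((8 * (M : ℝ) - 10) * K * L * Δt ^ 2 +
          (2 * K * L ^ 2 * (((M : ℝ) - 1) ^ 3 - ((M : ℝ) - 1)) / 3 * (1 + L * Δt) ^ (M - 3) +
            S * K ^ 2 * ((M : ℝ) * ((M : ℝ) - 1) * (2 * (M : ℝ) - 1)) / 3) * Δt ^ 3) •
          Metric.closedBall (0 : EuclideanSpace ℝ (Fin d)) 1 := by
  let i₀ : Fin M := ⟨0, by omega⟩
  have : Nonempty (Fin M) := ⟨i₀⟩
  -- `hS` gives `0 ≤ S` only in positive dimension; in dimension `0` the space is a point.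
  rcases Nat.eq_zero_or_pos d with rfl | hd
  · intro x _
    refine Set.mem_add.2 ⟨x, Set.mem_iUnion.2 ⟨i₀, ?_⟩, 0, ⟨0, by simp, smul_zero _⟩, add_zero x⟩
    rw [Subsingleton.elim x (traj Δt f (x₀ + Δt • f i₀ x₀) (fun _ => i₀) (M - 1))]
    exact subset_convexHull ℝ _ (traj_mem_iterMap _ _ _ _ _)
  have : Nonempty (Fin d) := ⟨⟨0, hd⟩⟩
  have hLip (i : Fin M) (x y) : ‖f i x - f i y‖ ≤ L * ‖x - y‖ :=
    convex_univ.norm_image_sub_le_of_norm_fderiv_le (fun z _ => (hdiff i).differentiableAt)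
      (fun z _ => hL i z) (Set.mem_univ y) (Set.mem_univ x)
  refine (convexHull_iterMap_subset (A := fun i => fderiv ℝ (f i) x₀) (Fintype.card_fin M).le
    hΔt.le hK (nonneg_of_forall_norm_le_mul_norm_sub_sq fun x => hS i₀ x 0) hLip
    (fun i => hL i x₀) (fun i x => hS i x x₀)).trans ?_
  rw [smul_unitClosedBall]
  refine Set.add_subset_add_left (Metric.closedBall_subset_closedBall ?_)
  exact (commutation_radius_le (by omega) ((norm_nonneg _).trans (hK i₀ x₀))
    ((norm_nonneg _).trans (hL i₀ x₀)) hΔt.le).trans (Real.le_norm_self _)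
end
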